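/- arXiv:2501.15832 — 2 statements merged into one kernel-verified Lean document; each statement's English description precedes it below -/
import Mathlib

section
/- Let M be a free abelian group of finite rank and let A_1,…,A_k be finite nonempty subsets of M. Define the defect of a subtuple indexed by I ⊆ {1,…,k} as δ(I) = (dimension of the affine span of the Minkowski sum ∑_{i∈I} A_i) − |I|. If the tuple (A_1,…,A_k) contains exactly one minimal linearly dependent subtuple (circuit), then every circuit C satisfies δ(C) = −1. -/
open Pointwise

/-- Dimension of the affine span of a finite set in `ℤ^d`: the rank (over `ℚ`)
of the span of all pairwise differences. -/
noncomputable def affDim {d : ℕ} (S : Finset (Fin d → ℤ)) : ℕ :=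
  Module.finrank ℚ (Submodule.span ℚ
    {v : Fin d → ℚ | ∃ x ∈ S, ∃ y ∈ S, v = fun i => ((x i : ℚ) - (y i : ℚ))})

/-- The defect of the subtuple of `A` indexed by `I`:
`dim (affine span of the Minkowski sum ∑_{i ∈ I} A i) − |I|`. -/
noncomputable def defectZ {d k : ℕ} (A : Fin k → Finset (Fin d → ℤ))
    (I : Finset (Fin k)) : ℤ :=
  (affDim (∑ i ∈ I, A i) : ℤ) - I.card

/-- A subtuple is linearly dependent if it contains a (nonempty) subtuple of
negative defect. -/
def IsLinDepTuple {d k : ℕ} (A : Fin k → Finset (Fin d → ℤ))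
    (I : Finset (Fin k)) : Prop :=
  ∃ J ⊆ I, J.Nonempty ∧ defectZ A J < 0

/-- A circuit is a minimal (by inclusion) linearly dependent subtuple. -/
def IsCircuit {d k : ℕ} (A : Fin k → Finset (Fin d → ℤ))
    (C : Finset (Fin k)) : Prop :=
  IsLinDepTuple A C ∧ ∀ C' ⊂ C, ¬ IsLinDepTuple A C'

lemma affDim_le_affDim_add {d : ℕ} (S T : Finset (Fin d → ℤ)) (hT : T.Nonempty) :
    affDim S ≤ affDim (S + T) := by
  obtain ⟨t, ht⟩ := hT
  apply Submodule.finrank_mono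
  apply Submodule.span_mono
  rintro v ⟨x, hx, y, hy, rfl⟩
  refine ⟨x + t, Finset.add_mem_add hx ht, y + t, Finset.add_mem_add hy ht, ?_⟩
  funext i
  simp only [Pi.add_apply]
  push_cast
  ring

/-- if the tuple contains exactly one circuit, then every circuit has
defect `−1`. -/
theorem stmt1 {d k : ℕ} (A : Fin k → Finset (Fin d → ℤ))
    (hA : ∀ i, (A i).Nonempty)
    (huniq : ∃! C : Finset (Fin k), IsCircuit A C) :
    ∀ C : Finset (Fin k), IsCircuit A C → defectZ A C = -1 := by
  intro C hC
  obtain ⟨⟨J, hJC, hJne, hJd⟩, hmin⟩ := hC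
  have hJeq : J = C := by
    by_contra h
    exact hmin J (hJC.ssubset_of_ne h) ⟨J, Finset.Subset.refl J, hJne, hJd⟩
  subst hJeq
  by_contra hne
  have h2 : defectZ A J ≤ -2 := by omega
  have hcard : 2 ≤ J.card := by
    unfold defectZ at h2
    omega
  obtain ⟨i, hi⟩ := hJne
  have hsum : ∑ j ∈ J, A j = (∑ j ∈ J.erase i, A j) + A i :=
    (Finset.sum_erase_add J A hi).symm
  have hle : affDim (∑ j ∈ J.erase i, A j) ≤ affDim (∑ j ∈ J, A j) := by
    rw [hsum]; exact affDim_le_affDim_add _ _ (hA i)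
  have hcardE : (J.erase i).card = J.card - 1 := Finset.card_erase_of_mem hi
  have hEne : (J.erase i).Nonempty := by
    rw [← Finset.card_pos, hcardE]; omega
  have hdE : defectZ A (J.erase i) < 0 := by
    unfold defectZ at h2 ⊢
    rw [hcardE]
    omega
  exact hmin (J.erase i) (Finset.erase_ssubset hi)
    ⟨J.erase i, Finset.Subset.refl _, hEne, hdE⟩
end

section
/- Let M be a free abelian group of finite rank n and let 𝒜 = (A_1,…,A_n) be a tuple of finite subsets of M. If 𝒜 is a BK-tuple, i.e., every subtuple has nonnegative defect and the whole tuple has defect zero, then the intersection and union of any two BK-subtuples (subtuples which are themselves of defect zero with all their subtuples of nonnegative defect) are again BK-subtuples; consequently the set of BK-subtuples of 𝒜, ordered by inclusion, forms a lattice under union and intersection. -/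
open Pointwise

/-- A BK-subtuple: zero defect, and all of its subtuples have nonnegative defect. -/
def IsBKsub {d k : ℕ} (A : Fin k → Finset (Fin d → ℤ)) (I : Finset (Fin k)) : Prop :=
  defectZ A I = 0 ∧ ∀ J ⊆ I, 0 ≤ defectZ A J

noncomputable def Dspan {d : ℕ} (S : Finset (Fin d → ℤ)) : Submodule ℚ (Fin d → ℚ) :=
  Submodule.span ℚ
    {v : Fin d → ℚ | ∃ x ∈ S, ∃ y ∈ S, v = fun i => ((x i : ℚ) - (y i : ℚ))}

lemma affDim_eq {d : ℕ} (S : Finset (Fin d → ℤ)) :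
    affDim S = Module.finrank ℚ (Dspan S) := rfl

lemma Dspan_add {d : ℕ} {S T : Finset (Fin d → ℤ)} (hS : S.Nonempty) (hT : T.Nonempty) :
    Dspan (S + T) = Dspan S ⊔ Dspan T := by
  apply le_antisymm
  · rw [Dspan, Submodule.span_le]
    rintro v ⟨x, hx, y, hy, rfl⟩
    rw [Finset.mem_add] at hx hy
    obtain ⟨a, ha, b, hb, rfl⟩ := hx
    obtain ⟨a', ha', b', hb', rfl⟩ := hy
    have : (fun i => (((a + b) i : ℚ) - ((a' + b') i : ℚ)))
        = (fun i => ((a i : ℚ) - (a' i : ℚ))) + (fun i => ((b i : ℚ) - (b' i : ℚ))) := by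
      funext i; simp [Pi.add_apply]; ring
    rw [this]
    exact Submodule.add_mem _
      (Submodule.mem_sup_left (Submodule.subset_span ⟨a, ha, a', ha', rfl⟩))
      (Submodule.mem_sup_right (Submodule.subset_span ⟨b, hb, b', hb', rfl⟩))
  · apply sup_le
    · rw [Dspan, Submodule.span_le]
      rintro v ⟨x, hx, y, hy, rfl⟩
      obtain ⟨b, hb⟩ := hT
      apply Submodule.subset_span
      refine ⟨x + b, Finset.add_mem_add hx hb, y + b, Finset.add_mem_add hy hb, ?_⟩
      funext i
      push_cast [Pi.add_apply]
      ring
    · rw [Dspan, Submodule.span_le]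
      rintro v ⟨x, hx, y, hy, rfl⟩
      obtain ⟨a, ha⟩ := hS
      apply Submodule.subset_span
      refine ⟨a + x, Finset.add_mem_add ha hx, a + y, Finset.add_mem_add ha hy, ?_⟩
      funext i
      push_cast [Pi.add_apply]
      ring

lemma sum_nonempty {d k : ℕ} (A : Fin k → Finset (Fin d → ℤ)) (hA : ∀ i, (A i).Nonempty)
    (I : Finset (Fin k)) : (∑ i ∈ I, A i).Nonempty := by
  induction I using Finset.induction with
  | empty => simp [Finset.zero_nonempty]
  | insert _ _ h ih =>
      rw [Finset.sum_insert h]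
      exact (hA _).add ih

lemma Dspan_sum {d k : ℕ} (A : Fin k → Finset (Fin d → ℤ)) (hA : ∀ i, (A i).Nonempty)
    (I : Finset (Fin k)) :
    Dspan (∑ i ∈ I, A i) = I.sup (fun i => Dspan (A i)) := by
  induction I using Finset.induction with
  | empty =>
      simp only [Finset.sum_empty, Finset.sup_empty]
      apply le_antisymm
      · rw [Dspan, Submodule.span_le]
        rintro v ⟨x, hx, y, hy, rfl⟩
        rw [Finset.mem_zero] at hx hy
        subst hx; subst hy
        simp [Submodule.mem_bot]
        funext i; simp
      · exact bot_le
  | insert _ _ h ih =>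
      rw [Finset.sum_insert h, Finset.sup_insert,
        Dspan_add (hA _) (sum_nonempty A hA _), ih]

/-- for a BK-tuple, the intersection and the union of any two
BK-subtuples are again BK-subtuples (hence the BK-subtuples form a lattice
under union and intersection, ordered by inclusion). -/
theorem stmt2 {n : ℕ} (A : Fin n → Finset (Fin n → ℤ)) (hA : ∀ i, (A i).Nonempty)
    (hBK : IsBKsub A Finset.univ)
    (I₁ I₂ : Finset (Fin n)) (h1 : IsBKsub A I₁) (h2 : IsBKsub A I₂) :
    IsBKsub A (I₁ ∩ I₂) ∧ IsBKsub A (I₁ ∪ I₂) := by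
  set W : Finset (Fin n) → Submodule ℚ (Fin n → ℚ) :=
    fun I => I.sup (fun i => Dspan (A i)) with hW
  have hdim : ∀ I : Finset (Fin n), affDim (∑ i ∈ I, A i) = Module.finrank ℚ (W I) := by
    intro I; rw [affDim_eq, Dspan_sum A hA]
  have hsub : (affDim (∑ i ∈ (I₁ ∪ I₂), A i) : ℤ) + affDim (∑ i ∈ (I₁ ∩ I₂), A i)
      ≤ affDim (∑ i ∈ I₁, A i) + affDim (∑ i ∈ I₂, A i) := by
    rw [hdim, hdim, hdim, hdim]
    have hU : W (I₁ ∪ I₂) = W I₁ ⊔ W I₂ := Finset.sup_union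
    have hI : W (I₁ ∩ I₂) ≤ W I₁ ⊓ W I₂ :=
      le_inf (Finset.sup_mono Finset.inter_subset_left)
        (Finset.sup_mono Finset.inter_subset_right)
    have h1' : Module.finrank ℚ (W (I₁ ∩ I₂)) ≤ Module.finrank ℚ ↥(W I₁ ⊓ W I₂) :=
      Submodule.finrank_mono hI
    have h2' := Submodule.finrank_sup_add_finrank_inf_eq (W I₁) (W I₂)
    rw [hU]
    omega
  have hd : defectZ A (I₁ ∪ I₂) + defectZ A (I₁ ∩ I₂) ≤ 0 := by
    have hc : (I₁ ∪ I₂).card + (I₁ ∩ I₂).card = I₁.card + I₂.card :=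
      Finset.card_union_add_card_inter I₁ I₂
    unfold defectZ
    have := h1.1; have := h2.1
    unfold defectZ at *
    omega
  have hnn : ∀ J : Finset (Fin n), 0 ≤ defectZ A J := fun J => hBK.2 J (Finset.subset_univ J)
  have hu0 : defectZ A (I₁ ∪ I₂) = 0 := le_antisymm (by linarith [hnn (I₁ ∩ I₂)]) (hnn _)
  have hi0 : defectZ A (I₁ ∩ I₂) = 0 := le_antisymm (by linarith [hnn (I₁ ∪ I₂)]) (hnn _)
  exact ⟨⟨hi0, fun J _ => hnn J⟩, ⟨hu0, fun J _ => hnn J⟩⟩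
end
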